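/- Let S = {a₁,…,a_m} ⊆ ℤ and let ω be an infinite word on S. Let ω′ be the word on ℤᵐ obtained by replacing each occurrence of a_j by the vector a_j′ ∈ ℤᵐ having a_j in coordinate j and 0 elsewhere (assume all a_j ≠ 0). Then ω has bounded abelian complexity if and only if ω′ has bounded additive complexity. -/

import Mathlib

def parikh {m : ℕ} (ω : ℕ → Fin m) (a' n : ℕ) : Fin m → ℕ :=
  fun c => ((Finset.range n).filter (fun i => ω (a' + i) = c)).card

noncomputable def abelianComplexity {m : ℕ} (ω : ℕ → Fin m) (n : ℕ) : ℕ :=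
  {v : Fin m → ℕ | ∃ b : ℕ, parikh ω b n = v}.ncard

def vFactorSum {m : ℕ} (ω' : ℕ → (Fin m → ℤ)) (b n : ℕ) : Fin m → ℤ :=
  ∑ i ∈ Finset.range n, ω' (b + i)

lemma parikh_eq_sum {m : ℕ} (ω : ℕ → Fin m) (b n : ℕ) (j : Fin m) :
    parikh ω b n j = ∑ i ∈ Finset.range n, (if ω (b + i) = j then 1 else 0) := by
  simp only [parikh]
  rw [Finset.card_filter]

lemma parikh_le {m : ℕ} (ω : ℕ → Fin m) (b n : ℕ) (j : Fin m) : parikh ω b n j ≤ n := by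
  simpa [parikh] using (Finset.card_filter_le (Finset.range n) (fun i => ω (b + i) = j))

lemma parikh_step {m : ℕ} (ω : ℕ → Fin m) (b n : ℕ) (j : Fin m) :
    parikh ω (b+1) n j ≤ parikh ω b n j + 1 ∧ parikh ω b n j ≤ parikh ω (b+1) n j + 1 := by
  have h1 : parikh ω b (n+1) j = parikh ω b n j + (if ω (b+n) = j then 1 else 0) := by
    rw [parikh_eq_sum, parikh_eq_sum, Finset.sum_range_succ]
  have h2 : parikh ω b (n+1) j = (if ω b = j then 1 else 0) + parikh ω (b+1) n j := by
    rw [parikh_eq_sum, parikh_eq_sum, Finset.sum_range_succ']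
    rw [add_comm]
    congr 1
    refine Finset.sum_congr rfl (fun i _ => ?_)
    have h : b + (i+1) = b + 1 + i := by omega
    rw [h]
  split_ifs at h1 h2 <;> omega

lemma ivt_up (f : ℕ → ℕ) (hstep : ∀ k, f (k+1) ≤ f k + 1) :
    ∀ N v, f 0 ≤ v → v ≤ f N → ∃ k, f k = v := by
  intro N
  induction N with
  | zero => intro v h1 h2; exact ⟨0, by omega⟩
  | succ N ih =>
    intro v h1 h2
    by_cases h : v ≤ f N
    · exact ih v h1 h
    · exact ⟨N + 1, by have := hstep N; omega⟩

lemma ivt_down (f : ℕ → ℕ) (hstep : ∀ k, f k ≤ f (k+1) + 1) :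
    ∀ N v, f N ≤ v → v ≤ f 0 → ∃ k, f k = v := by
  intro N
  induction N with
  | zero => intro v h1 h2; exact ⟨0, by omega⟩
  | succ N ih =>
    intro v h1 h2
    by_cases h : f N ≤ v
    · exact ih v h h2
    · exact ⟨N + 1, by have := hstep N; omega⟩

lemma parikh_ivt {m : ℕ} (ω : ℕ → Fin m) (n : ℕ) (j : Fin m) (b c v : ℕ)
    (h1 : parikh ω b n j ≤ v) (h2 : v ≤ parikh ω c n j) :
    ∃ d, parikh ω d n j = v := by
  rcases le_total b c with hbc | hbc
  · have hstep : ∀ k, parikh ω (b + (k+1)) n j ≤ parikh ω (b + k) n j + 1 := by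
      intro k
      have h := (parikh_step ω (b + k) n j).1
      have e : b + (k+1) = b + k + 1 := by omega
      rw [e]; exact h
    obtain ⟨k, hk⟩ := ivt_up (fun k => parikh ω (b + k) n j) hstep (c - b) v
      (by simpa using h1)
      (by show v ≤ parikh ω (b + (c - b)) n j
          rw [show b + (c - b) = c from by omega]; exact h2)
    exact ⟨b + k, hk⟩
  · have hstep : ∀ k, parikh ω (c + k) n j ≤ parikh ω (c + (k+1)) n j + 1 := by
      intro k
      have h := (parikh_step ω (c + k) n j).2
      have e : c + (k+1) = c + k + 1 := by omega
      rw [e]; exact h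
    obtain ⟨k, hk⟩ := ivt_down (fun k => parikh ω (c + k) n j) hstep (b - c) v
      (by show parikh ω (c + (b - c)) n j ≤ v
          rw [show c + (b - c) = b from by omega]; exact h1)
      (by simpa using h2)
    exact ⟨c + k, hk⟩

lemma vsum_eq {m : ℕ} (a : Fin m → ℤ) (ω : ℕ → Fin m) (ω' : ℕ → (Fin m → ℤ))
    (hω' : ∀ n : ℕ, ω' n = fun j => if ω n = j then a j else 0) (b n : ℕ) (j : Fin m) :
    vFactorSum ω' b n j = a j * (parikh ω b n j : ℤ) := by
  have h : vFactorSum ω' b n j = ∑ i ∈ Finset.range n, (if ω (b + i) = j then a j else 0) := by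
    simp [vFactorSum, Finset.sum_apply, hω']
  rw [h, ← Finset.sum_filter, Finset.sum_const, parikh]
  simp [mul_comm]

/-- `ω` has bounded abelian complexity iff the associated vector word `ω'`
(replacing `a j` by `a j • e j`) has bounded additive complexity. -/
theorem stmt13 (m : ℕ) (a : Fin m → ℤ) (ha : Function.Injective a)
    (ha0 : ∀ j, a j ≠ 0) (ω : ℕ → Fin m)
    (ω' : ℕ → (Fin m → ℤ))
    (hω' : ∀ n : ℕ, ω' n = fun j => if ω n = j then a j else 0) :
    (∃ M : ℕ, ∀ n : ℕ, 1 ≤ n → abelianComplexity ω n ≤ M) ↔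
    (∃ M : ℕ, ∀ b c n : ℕ, ∀ j : Fin m,
      |vFactorSum ω' b n j - vFactorSum ω' c n j| ≤ (M : ℤ)) := by
  constructor
  · rintro ⟨M, hM⟩
    refine ⟨(Finset.univ.sup fun j => (a j).natAbs) * M, ?_⟩
    intro b c n j
    set A : ℕ := Finset.univ.sup fun j => (a j).natAbs with hA
    rcases Nat.eq_zero_or_pos n with hn | hn
    · subst hn
      simp only [vFactorSum, Finset.range_zero, Finset.sum_empty, Pi.zero_apply, sub_zero,
        abs_zero]
      positivity
    -- the set of Parikh vectors of length n is finite with at most M elements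
    set S : Set (Fin m → ℕ) := {v | ∃ d : ℕ, parikh ω d n = v} with hS
    have hfin : S.Finite := by
      apply Set.Finite.subset (Finset.finite_toSet
        (Fintype.piFinset fun _ : Fin m => Finset.range (n+1)))
      rintro v ⟨d, rfl⟩
      simp only [Finset.coe_sort_coe, Finset.mem_coe, Fintype.mem_piFinset, Finset.mem_range]
      intro i
      exact Nat.lt_succ_of_le (parikh_le ω d n i)
    set pb := parikh ω b n j with hpb
    set pc := parikh ω c n j with hpc
    set lo := min pb pc with hlo
    set hi := max pb pc with hhi
    have hiv : ∀ v : ℕ, ∃ d : ℕ, lo ≤ v → v ≤ hi → parikh ω d n j = v := by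
      intro v
      by_cases hv : lo ≤ v ∧ v ≤ hi
      · have hv1 : min pb pc ≤ v := hv.1
        have hv2 : v ≤ max pb pc := hv.2
        rcases le_total pb pc with h | h
        · obtain ⟨d, hd⟩ := parikh_ivt ω n j b c v (by omega) (by omega)
          exact ⟨d, fun _ _ => hd⟩
        · obtain ⟨d, hd⟩ := parikh_ivt ω n j c b v (by omega) (by omega)
          exact ⟨d, fun _ _ => hd⟩
      · exact ⟨0, fun h1 h2 => absurd ⟨h1, h2⟩ hv⟩
    choose d hd using hiv
    have hcard : (Finset.Icc lo hi).card ≤ M := by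
      have h1 : (Finset.Icc lo hi).card ≤ hfin.toFinset.card := by
        apply Finset.card_le_card_of_injOn (fun v => parikh ω (d v) n)
        · intro v _
          simp only [Set.Finite.mem_toFinset, hS, Set.mem_setOf_eq]
          exact Finset.mem_coe.mpr ((Set.Finite.mem_toFinset hfin).mpr ⟨d v, rfl⟩)
        · intro v1 hv1 v2 hv2 he
          rw [Finset.mem_coe, Finset.mem_Icc] at hv1 hv2
          have e1 : parikh ω (d v1) n j = v1 := hd v1 hv1.1 hv1.2
          have e2 : parikh ω (d v2) n j = v2 := hd v2 hv2.1 hv2.2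
          rw [← e1, ← e2]
          exact congrFun he j
      have h2 : hfin.toFinset.card = abelianComplexity ω n := by
        rw [abelianComplexity, Set.ncard_eq_toFinset_card _ hfin]
      have h3 := hM n hn
      omega
    have hcard' : (Finset.Icc lo hi).card ≤ M := hcard
    have hMbound : hi + 1 - lo ≤ M := by
      rwa [Nat.card_Icc] at hcard'
    have hlohi : lo ≤ hi := min_le_max
    -- now conclude
    rw [vsum_eq a ω ω' hω' b n j, vsum_eq a ω ω' hω' c n j]
    have habs : |(pb : ℤ) - (pc : ℤ)| ≤ (M : ℤ) := by
      have h1 : max pb pc + 1 - min pb pc ≤ M := hMbound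
      rw [abs_le]
      constructor <;> omega
    have haj : |a j| ≤ (A : ℤ) := by
      have h := Finset.le_sup (f := fun j => (a j).natAbs) (Finset.mem_univ j)
      rw [Int.abs_eq_natAbs]
      exact_mod_cast h
    calc |a j * (pb : ℤ) - a j * (pc : ℤ)| = |a j| * |(pb : ℤ) - (pc : ℤ)| := by
          rw [← abs_mul]; ring_nf
      _ ≤ (A : ℤ) * (M : ℤ) :=
          mul_le_mul haj habs (abs_nonneg _) (by exact_mod_cast Nat.zero_le A)
      _ = ((A * M : ℕ) : ℤ) := by push_cast; ring
  · rintro ⟨M, hM⟩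
    refine ⟨(2 * M + 1) ^ m, fun n _ => ?_⟩
    have hp : ∀ (dd : ℕ) (j : Fin m),
        parikh ω 0 n j ≤ parikh ω dd n j + M ∧ parikh ω dd n j ≤ parikh ω 0 n j + M := by
      intro dd j
      have h := hM dd 0 n j
      rw [vsum_eq a ω ω' hω' dd n j, vsum_eq a ω ω' hω' 0 n j] at h
      have haj : 1 ≤ |a j| := Int.one_le_abs (ha0 j)
      have h2 : |(parikh ω dd n j : ℤ) - (parikh ω 0 n j : ℤ)| ≤ (M : ℤ) := by
        have e : a j * (parikh ω dd n j : ℤ) - a j * (parikh ω 0 n j : ℤ)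
            = a j * ((parikh ω dd n j : ℤ) - (parikh ω 0 n j : ℤ)) := by ring
        rw [e, abs_mul] at h
        nlinarith [abs_nonneg ((parikh ω dd n j : ℤ) - (parikh ω 0 n j : ℤ))]
      rcases abs_le.mp h2 with ⟨hl, hr⟩
      omega
    rw [abelianComplexity]
    have hsub : {v : Fin m → ℕ | ∃ b, parikh ω b n = v} ⊆
        ↑(Fintype.piFinset fun j => Finset.Icc (parikh ω 0 n j - M) (parikh ω 0 n j + M)) := by
      rintro v ⟨dd, rfl⟩
      simp only [Finset.coe_sort_coe, Finset.mem_coe, Fintype.mem_piFinset, Finset.mem_Icc]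
      intro j
      have := hp dd j
      omega
    calc {v : Fin m → ℕ | ∃ b, parikh ω b n = v}.ncard
        ≤ (↑(Fintype.piFinset fun j => Finset.Icc (parikh ω 0 n j - M) (parikh ω 0 n j + M)) :
            Set (Fin m → ℕ)).ncard :=
          Set.ncard_le_ncard hsub (Finset.finite_toSet _)
      _ = (Fintype.piFinset fun j => Finset.Icc (parikh ω 0 n j - M) (parikh ω 0 n j + M)).card :=
          Set.ncard_coe_finset _
      _ = ∏ j : Fin m, (Finset.Icc (parikh ω 0 n j - M) (parikh ω 0 n j + M)).card :=
          Fintype.card_piFinset _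
      _ ≤ ∏ _j : Fin m, (2 * M + 1) := by
          apply Finset.prod_le_prod' 
          intro i _
          rw [Nat.card_Icc]
          omega
      _ = (2 * M + 1) ^ m := by simp
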